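/- arXiv:2012.02522 — 2 statements merged into one kernel-verified Lean document; each statement's English description precedes it below -/
import Mathlib

section
/- (Bounds on subproblem suboptimality by the objective gap.) Let H be a real Hilbert space, f : H → ℝ differentiable, Ψ : H → ℝ ∪ {+∞} convex, proper and lower semicontinuous, and F = f + Ψ bounded below by F*. Let A be self-adjoint positive semidefinite, x a point with F(x) < +∞, and suppose p satisfies the multiplicative inexactness condition with parameter η ∈ [0,1) for Q_A(·; x), the step size α satisfies α ≥ ᾱ > 0 and the Armijo condition with parameter γ ∈ (0,1), and F(x + α p) ≥ F*. Then, writing δ = F(x) − F*, Q̂ = Q_A(p; x) and Q* = min_q Q_A(q; x), one has Q̂ − Q* ≤ η δ / (γ ᾱ (1 − η)) and −Q* ≤ δ / (γ ᾱ (1 − η)). -/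
open Metric Filter

/-- The regularized objective `F = f + Ψ` (with `Ψ` extended-real-valued). -/
noncomputable def objF {H : Type*} [NormedAddCommGroup H] [InnerProductSpace ℝ H]
    (f : H → ℝ) (Ψ : H → EReal) (x : H) : EReal := (f x : EReal) + Ψ x

/-- The subproblem model `Q_A(p; x) = ⟨∇f(x), p⟩ + (1/2)⟨p, A p⟩ + Ψ(x + p) − Ψ(x)`. -/
noncomputable def modelQ {H : Type*} [NormedAddCommGroup H] [InnerProductSpace ℝ H]
    (f' : H → H) (Ψ : H → EReal) (A : H →L[ℝ] H) (x p : H) : EReal :=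
  (((inner ℝ (f' x) p : ℝ) + (1 / 2) * (inner ℝ p (A p) : ℝ) : ℝ) : EReal) + Ψ (x + p) - Ψ x

/-- Convexity for an extended-real-valued function. -/
def ConvexEReal {H : Type*} [NormedAddCommGroup H] [InnerProductSpace ℝ H]
    (Ψ : H → EReal) : Prop :=
  ∀ x y : H, ∀ a b : ℝ, 0 ≤ a → 0 ≤ b → a + b = 1 →
    Ψ (a • x + b • y) ≤ (a : EReal) * Ψ x + (b : EReal) * Ψ y

/-- Properness: `Ψ` never takes the value `−∞` and is finite somewhere
(i.e. `Ψ : H → ℝ ∪ {+∞}` is proper). -/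
def ProperEReal {H : Type*} (Ψ : H → EReal) : Prop :=
  (∀ x, Ψ x ≠ ⊥) ∧ (∃ x, Ψ x ≠ ⊤)

/-!
Since `Q* ≤ Q(0) = 0`, the inexactness condition gives `Q̂ ≤ (1 - η) Q*`, while the Armijo
condition together with `F(x + α p) ≥ F*` gives `-γ α Q̂ ≤ δ`. Hence
`γ ᾱ (1 - η) (-Q*) ≤ γ α (1 - η) (-Q*) ≤ δ`, which is the second bound; the first follows
from `Q̂ - Q* ≤ η (-Q*)`. Finiteness of `F(x)` and properness of `Ψ` make all model values real.
-/

section Model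

variable {H : Type*} [NormedAddCommGroup H] [InnerProductSpace ℝ H]

lemma apply_eq_coe_of_objF_eq_coe {f : H → ℝ} {Ψ : H → EReal} {x : H} {r : ℝ}
    (h : objF f Ψ x = r) : Ψ x = ((r - f x : ℝ) : EReal) := by
  unfold objF at h
  induction hψ : Ψ x using EReal.rec with
  | bot =>
    rw [hψ, EReal.add_bot] at h
    exact absurd h.symm (EReal.coe_ne_bot r)
  | top =>
    rw [hψ, EReal.add_top_of_ne_bot (EReal.coe_ne_bot _)] at h
    exact absurd h.symm (EReal.coe_ne_top r)
  | coe a =>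
    rw [hψ, ← EReal.coe_add, EReal.coe_eq_coe_iff] at h
    rw [← h, add_sub_cancel_left]

variable {f' : H → H} {Ψ : H → EReal} {A : H →L[ℝ] H} {x : H} {c : ℝ}

lemma modelQ_zero (hx : Ψ x = c) : modelQ f' Ψ A x 0 = 0 := by
  simp [modelQ, hx]

lemma exists_modelQ_eq_coe {q : H} (hx : Ψ x = c) (hq : Ψ (x + q) ≠ ⊥)
    (htop : modelQ f' Ψ A x q ≠ ⊤) : ∃ r : ℝ, modelQ f' Ψ A x q = r := by
  refine ⟨_, (EReal.coe_toReal htop ?_).symm⟩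
  rw [modelQ, hx, sub_eq_add_neg, ← EReal.coe_neg]
  simp only [ne_eq, EReal.add_eq_bot_iff, EReal.coe_ne_bot, hq, or_self, not_false_eq_true]

end Model

lemma neg_le_div_of_inexact_of_armijo {Qp Qs η γ α αbar δ : ℝ} (hQs : Qs ≤ 0) (hη1 : η < 1)
    (hγ : 0 < γ) (hαbar : 0 < αbar) (hα : αbar ≤ α) (hinexact : Qp - Qs ≤ η * -Qs)
    (hdecrease : 0 ≤ δ + γ * α * Qp) :
    -Qs ≤ δ / (γ * αbar * (1 - η)) := by
  have hη : 0 < 1 - η := sub_pos.2 hη1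
  rw [le_div_iff₀ (by positivity)]
  calc -Qs * (γ * αbar * (1 - η)) = γ * αbar * ((1 - η) * -Qs) := by ring
    _ ≤ γ * α * ((1 - η) * -Qs) := by gcongr; exact mul_nonneg hη.le (neg_nonneg.2 hQs)
    _ ≤ γ * α * -Qp := by
      have hα0 : 0 < α := hαbar.trans_le hα
      gcongr; linarith
    _ ≤ δ := by linarith

theorem statement6_general
    {H : Type*} [NormedAddCommGroup H] [InnerProductSpace ℝ H]
    (f : H → ℝ) (f' : H → H) (Ψ : H → EReal) (Fstar : ℝ)
    (A : H →L[ℝ] H) (η γ α αbar δ : ℝ) (x p qstar : H)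
    -- Ψ convex, proper, lower semicontinuous
    (hΨ_proper : ProperEReal Ψ)
    -- x with F(x) < +∞ and δ = F(x) − F*
    (hδ : objF f Ψ x = ((Fstar + δ : ℝ) : EReal))
    -- Q* = min_q Q_A(q; x) is attained at qstar
    (hqstar : ∀ q : H, modelQ f' Ψ A x qstar ≤ modelQ f' Ψ A x q)
    -- multiplicative inexactness condition with parameter η ∈ [0,1)
    (hη0 : 0 ≤ η) (hη1 : η < 1)
    (hinexact : modelQ f' Ψ A x p - modelQ f' Ψ A x qstar ≤
      (η : EReal) * -(modelQ f' Ψ A x qstar))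
    -- step size α ≥ ᾱ > 0 satisfying the Armijo condition with parameter γ ∈ (0,1)
    (hγ0 : 0 < γ) (hαbar : 0 < αbar) (hα : αbar ≤ α)
    (harmijo : objF f Ψ (x + α • p) ≤
      objF f Ψ x + ((γ * α : ℝ) : EReal) * modelQ f' Ψ A x p)
    -- F(x + α p) ≥ F*
    (hnew : (Fstar : EReal) ≤ objF f Ψ (x + α • p)) :
    modelQ f' Ψ A x p - modelQ f' Ψ A x qstar ≤
      ((η * δ / (γ * αbar * (1 - η)) : ℝ) : EReal) ∧
    -(modelQ f' Ψ A x qstar) ≤ ((δ / (γ * αbar * (1 - η)) : ℝ) : EReal) := by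
  have hx := apply_eq_coe_of_objF_eq_coe hδ
  have hQs_nonpos : modelQ f' Ψ A x qstar ≤ 0 := modelQ_zero (f' := f') (A := A) hx ▸ hqstar 0
  obtain ⟨Qs, hQs⟩ := exists_modelQ_eq_coe hx (hΨ_proper.1 _)
    (hQs_nonpos.trans_lt EReal.zero_lt_top).ne
  have hQp_ne_top : modelQ f' Ψ A x p ≠ ⊤ := by
    intro h
    rw [h, hQs, EReal.top_sub_coe, ← EReal.coe_neg, ← EReal.coe_mul] at hinexact
    exact (EReal.coe_lt_top _).not_ge hinexact
  obtain ⟨Qp, hQp⟩ := exists_modelQ_eq_coe hx (hΨ_proper.1 _) hQp_ne_top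
  rw [hQs, hQp] at hinexact ⊢
  rw [hδ, hQp] at harmijo
  have hinexact' : Qp - Qs ≤ η * -Qs := by exact_mod_cast hinexact
  have hdecrease : 0 ≤ δ + γ * α * Qp := by
    have : (Fstar : EReal) ≤ ((Fstar + δ : ℝ) : EReal) + ((γ * α : ℝ) : EReal) * Qp :=
      hnew.trans harmijo
    norm_cast at this
    linarith
  have hgap := neg_le_div_of_inexact_of_armijo (by exact_mod_cast hQs ▸ hQs_nonpos) hη1 hγ0
    hαbar hα hinexact' hdecrease
  refine ⟨?_, by exact_mod_cast hgap⟩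
  rw [← EReal.coe_sub, EReal.coe_le_coe_iff, mul_div_assoc]
  exact hinexact'.trans (mul_le_mul_of_nonneg_left hgap hη0)

/-- bounds on the subproblem suboptimality by the objective gap:
`Q̂ − Q* ≤ η δ / (γ ᾱ (1 − η))` and `−Q* ≤ δ / (γ ᾱ (1 − η))`, where Q* is the attained
minimum of the subproblem (at `qstar`). -/
theorem statement6
    {H : Type*} [NormedAddCommGroup H] [InnerProductSpace ℝ H] [CompleteSpace H]
    (f : H → ℝ) (f' : H → H) (Ψ : H → EReal) (Fstar : ℝ)
    (A : H →L[ℝ] H) (η γ α αbar δ : ℝ) (x p qstar : H)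
    -- f differentiable with gradient f'
    (hf_diff : ∀ y : H, HasGradientAt f (f' y) y)
    -- Ψ convex, proper, lower semicontinuous
    (hΨ_conv : ConvexEReal Ψ)
    (hΨ_proper : ProperEReal Ψ)
    (hΨ_lsc : LowerSemicontinuous Ψ)
    -- F bounded below by F*
    (hFstar_lb : ∀ y : H, (Fstar : EReal) ≤ objF f Ψ y)
    -- A self-adjoint positive semidefinite
    (hA_sa : ∀ u v : H, (inner ℝ (A u) v : ℝ) = (inner ℝ u (A v) : ℝ))
    (hA_psd : ∀ u : H, (0 : ℝ) ≤ (inner ℝ u (A u) : ℝ))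
    -- x with F(x) < +∞ and δ = F(x) − F*
    (hδ : objF f Ψ x = ((Fstar + δ : ℝ) : EReal))
    -- Q* = min_q Q_A(q; x) is attained at qstar
    (hqstar : ∀ q : H, modelQ f' Ψ A x qstar ≤ modelQ f' Ψ A x q)
    -- multiplicative inexactness condition with parameter η ∈ [0,1)
    (hη0 : 0 ≤ η) (hη1 : η < 1)
    (hinexact : modelQ f' Ψ A x p - modelQ f' Ψ A x qstar ≤
      (η : EReal) * -(modelQ f' Ψ A x qstar))
    -- step size α ≥ ᾱ > 0 satisfying the Armijo condition with parameter γ ∈ (0,1)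
    (hγ0 : 0 < γ) (hγ1 : γ < 1) (hαbar : 0 < αbar) (hα : αbar ≤ α)
    (harmijo : objF f Ψ (x + α • p) ≤
      objF f Ψ x + ((γ * α : ℝ) : EReal) * modelQ f' Ψ A x p)
    -- F(x + α p) ≥ F*
    (hnew : (Fstar : EReal) ≤ objF f Ψ (x + α • p)) :
    modelQ f' Ψ A x p - modelQ f' Ψ A x qstar ≤
      ((η * δ / (γ * αbar * (1 - η)) : ℝ) : EReal) ∧
    -(modelQ f' Ψ A x qstar) ≤ ((δ / (γ * αbar * (1 - η)) : ℝ) : EReal) :=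
  statement6_general f f' Ψ Fstar A η γ α αbar δ x p qstar hΨ_proper hδ hqstar hη0 hη1 hinexact hγ0
    hαbar hα harmijo hnew
end

section
/- (Global O(1/t) rate of ISQA+ for convex f.) Under the setting of the global convergence theorem for ISQA+ — f convex and L-smooth, Ψ convex proper lsc, Ω ≠ ∅, monotone iterates F(x^{t+1}) ≤ F(x^t), indices k_t at which M̃ ⪰ H_{k_t} ⪰ m̃ > 0, p^{k_t} satisfies the multiplicative inexactness condition with parameter η ∈ [0,1), and F(x^{k_t+1}) ≤ F(x^{k_t}) + γ Q_{H_{k_t}}(p^{k_t}; x^{k_t}) with x^{k_t+1} = x^{k_t} + p^{k_t} — suppose in addition R₀ := sup { ‖x − P_Ω(x)‖ : F(x) ≤ F(x^0) } < ∞. Then: (a) whenever F(x^{k_t}) − F* ≥ M̃ R₀², one has F(x^{k_t+1}) − F* ≤ (1 − γ(1−η)/2)(F(x^{k_t}) − F*); (b) letting t₀ be the first index with F(x^{k_{t₀}}) − F* < M̃ R₀², for all t ≥ t₀ one has F(x^{k_t}) − F* ≤ 2 M̃ R₀² / (γ (1 − η)(t − t₀) + 2), and t₀ ≤ max{0, 1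 + (2/(γ(1−η))) log((F(x^0) − F*)/(M̃ R₀²))}. -/
open Metric Filter

/-!
At an iteration `x = x^{k_t}` with gap `δ = F(x) − F*`, the step `τ (z − x)` towards a point
`z ∈ Ω`, `τ ∈ [0, 1]`, has model value at most `−τ δ + τ² M̃ ‖z − x‖² / 2` by convexity of `f`
and `Ψ`. Since `dist(x, Ω) ≤ R₀` on the initial level set, `Q* ≤ −τ δ + τ² M̃ R₀² / 2`, and the
inexactness and sufficient decrease conditions pass this bound, scaled by `γ (1 − η)`, on to
`F`. Taking `τ = 1` gives the linear decrease (a); taking `τ = δ / (M̃ R₀²)` gives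
`δ⁺ ≤ δ − γ (1 − η) δ² / (2 M̃ R₀²)`, whence the `O(1/t)` rate, while the linear phase lasts
only logarithmically many steps. That `Q*` is finite at all comes from `H_{k_t} ⪰ m̃ > 0`
together with a continuous affine minorant of `Ψ`, obtained by separating a point from its
closed convex epigraph.
-/

theorem ConvexOn.add_fderiv_sub_le {E : Type*} [NormedAddCommGroup E] [NormedSpace ℝ E]
    {s : Set E} {f : E → ℝ} {f' : E →L[ℝ] ℝ} {a b : E} (hf : ConvexOn ℝ s f) (ha : a ∈ s)
    (hb : b ∈ s) (hfa : HasFDerivAt f f' a) : f a + f' (b - a) ≤ f b := by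
  let ℓ : ℝ →ᵃ[ℝ] E := AffineMap.lineMap a b
  have hline : ConvexOn ℝ (ℓ ⁻¹' s) (f ∘ ℓ) := hf.comp_affineMap ℓ
  have hderiv : HasDerivAt (f ∘ ℓ) (f' (b - a)) 0 := by
    have hfa' : HasFDerivAt f f' (ℓ 0) := by simpa [ℓ] using hfa
    exact hfa'.comp_hasDerivAt 0 AffineMap.hasDerivAt_lineMap
  have := hline.le_slope_of_hasDerivAt (x := 0) (y := 1) (by simpa [ℓ] using ha)
    (by simpa [ℓ] using hb) one_pos hderiv
  simp only [slope_def_field, Function.comp_apply, ℓ, AffineMap.lineMap_apply_one,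
    AffineMap.lineMap_apply_zero, sub_zero, div_one] at this
  linarith [f'.map_sub b a]

theorem ConvexOn.add_inner_gradient_sub_le {H : Type*} [NormedAddCommGroup H]
    [InnerProductSpace ℝ H] [CompleteSpace H] {s : Set H} {f : H → ℝ} {g a b : H}
    (hf : ConvexOn ℝ s f) (ha : a ∈ s) (hb : b ∈ s) (hfa : HasGradientAt f g a) :
    f a + inner ℝ g (b - a) ≤ f b := by
  simpa using hf.add_fderiv_sub_le ha hb (hasGradientAt_iff_hasFDerivAt.mp hfa)

theorem EReal.eq_coe_sub_of_coe_add_eq_coe {a b : ℝ} {w : EReal} (h : (a : EReal) + w = b) :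
    w = ((b - a : ℝ) : EReal) := by
  induction w using EReal.rec with
  | bot => simp at h
  | coe r => norm_cast at h ⊢; linarith
  | top => simp at h

theorem LowerSemicontinuous.isClosed_real_epigraph {α : Type*} [TopologicalSpace α]
    {Ψ : α → EReal} (hΨ : LowerSemicontinuous Ψ) : IsClosed {q : α × ℝ | Ψ q.1 ≤ q.2} :=
  hΨ.isClosed_epigraph.preimage
    (continuous_fst.prodMk (continuous_coe_real_ereal.comp continuous_snd))

section InnerProductSpace

variable {H : Type*} [NormedAddCommGroup H] [InnerProductSpace ℝ H]

theorem ConvexEReal.convex_epigraph {Ψ : H → EReal} (hΨ : ConvexEReal Ψ) :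
    Convex ℝ {q : H × ℝ | Ψ q.1 ≤ q.2} := by
  rintro ⟨z₁, s₁⟩ h₁ ⟨z₂, s₂⟩ h₂ a b ha hb hab
  calc Ψ (a • z₁ + b • z₂) ≤ (a : EReal) * Ψ z₁ + (b : EReal) * Ψ z₂ := hΨ z₁ z₂ a b ha hb hab
    _ ≤ (a : EReal) * s₁ + (b : EReal) * s₂ := by
        gcongr
        exacts [h₁, h₂]
    _ = ((a • (z₁, s₁) + b • (z₂, s₂)).2 : ℝ) := by simp

theorem ConvexEReal.exists_affine_le {Ψ : H → EReal} (hconv : ConvexEReal Ψ)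
    (hlsc : LowerSemicontinuous Ψ) {x₁ : H} {r₁ : ℝ} (hx₁ : Ψ x₁ = r₁) :
    ∃ (g : H →L[ℝ] ℝ) (c : ℝ), ∀ z, ((g z + c : ℝ) : EReal) ≤ Ψ z := by
  obtain ⟨φ, u, hφS, hφx₁⟩ := geometric_hahn_banach_closed_point (x := (x₁, r₁ - 1))
    hconv.convex_epigraph hlsc.isClosed_real_epigraph (by
      change ¬ Ψ x₁ ≤ ((r₁ - 1 : ℝ) : EReal)
      rw [hx₁, EReal.coe_le_coe_iff]
      linarith)
  set β := φ (0, 1)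
  have hsplit : ∀ z s, φ (z, s) = φ (z, 0) + s * β := fun z s => by
    rw [show ((z, s) : H × ℝ) = (z, 0) + s • (0, 1) by simp, map_add, map_smul, smul_eq_mul]
  have hβ : β < 0 := by
    have hx₁S := hφS (x₁, r₁) (by simp [hx₁])
    rw [hsplit] at hx₁S hφx₁
    linarith
  refine ⟨(-β⁻¹) • φ.comp (ContinuousLinearMap.inl ℝ H ℝ), u / β, fun z => ?_⟩
  refine EReal.le_of_forall_lt_iff_le.mp fun s hs => EReal.coe_le_coe_iff.mpr ?_
  have hzS := hφS (z, s) hs.le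
  rw [hsplit] at hzS
  change -β⁻¹ * φ (z, 0) + u / β ≤ s
  rw [show -β⁻¹ * φ (z, 0) + u / β = (u - φ (z, 0)) / β by ring, div_le_iff_of_neg hβ]
  linarith

section Model

variable {f' : H → H} {Ψ : H → EReal} {A : H →L[ℝ] H} {y q : H} {a b : ℝ}

theorem modelQ_eq_coe (hy : Ψ y = a) (hq : Ψ (y + q) = b) :
    modelQ f' Ψ A y q = ((inner ℝ (f' y) q + 1 / 2 * inner ℝ q (A q) + b - a : ℝ) : EReal) := by
  rw [modelQ, hy, hq]
  norm_cast

theorem modelQ_le_coe (hy : Ψ y = a) (hq : Ψ (y + q) ≤ b) :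
    modelQ f' Ψ A y q ≤ ((inner ℝ (f' y) q + 1 / 2 * inner ℝ q (A q) + b - a : ℝ) : EReal) := by
  rw [modelQ, hy]
  refine (EReal.sub_le_sub (add_le_add le_rfl hq) le_rfl).trans_eq ?_
  norm_cast

theorem coe_le_modelQ (hy : Ψ y = a) (hq : b ≤ Ψ (y + q)) :
    ((inner ℝ (f' y) q + 1 / 2 * inner ℝ q (A q) + b - a : ℝ) : EReal) ≤ modelQ f' Ψ A y q := by
  rw [modelQ, hy]
  refine le_of_eq_of_le ?_ (EReal.sub_le_sub (add_le_add le_rfl hq) le_rfl)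
  norm_cast

-- Since `Q − ⊥ = ⊤`, the inexactness condition carries no information when `Q* = ⊥` and `η > 0`.
theorem iInf_modelQ_ne_bot {m : ℝ} (hm : 0 < m) (hA : ∀ u, m * ‖u‖ ^ 2 ≤ inner ℝ u (A u))
    {g : H →L[ℝ] ℝ} {c : ℝ} (hg : ∀ z, ((g z + c : ℝ) : EReal) ≤ Ψ z) (hy : Ψ y = a) :
    ⨅ q, modelQ f' Ψ A y q ≠ ⊥ := by
  set C := ‖f' y‖ + ‖g‖
  have hlow : ∀ q, ((g y + c - a - C ^ 2 / (2 * m) : ℝ) : EReal) ≤ modelQ f' Ψ A y q := by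
    intro q
    refine le_trans ?_ (coe_le_modelQ hy (hg (y + q)))
    rw [EReal.coe_le_coe_iff, map_add]
    have hf'q : -(‖f' y‖ * ‖q‖) ≤ inner ℝ (f' y) q := (abs_le.mp (abs_real_inner_le_norm _ _)).1
    have hgq : -(‖g‖ * ‖q‖) ≤ g q := (abs_le.mp (g.le_opNorm q)).1
    have hAq := hA q
    have hsq : C * ‖q‖ - m / 2 * ‖q‖ ^ 2 ≤ C ^ 2 / (2 * m) := by
      rw [le_div_iff₀ (by positivity)]
      nlinarith [sq_nonneg (m * ‖q‖ - C)]
    nlinarith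
  exact ne_bot_of_le_ne_bot (EReal.coe_ne_bot _) (le_iInf hlow)

theorem iInf_modelQ_le [CompleteSpace H] {f : H → ℝ} (hf : ConvexOn ℝ Set.univ f)
    (hf' : ∀ z, HasGradientAt f (f' z) z) (hΨ : ConvexEReal Ψ) {M : ℝ}
    (hA : ∀ u, inner ℝ u (A u) ≤ M * ‖u‖ ^ 2) {z : H} (hy : Ψ y = a) (hz : Ψ z = b) {τ : ℝ}
    (hτ0 : 0 ≤ τ) (hτ1 : τ ≤ 1) :
    ⨅ q, modelQ f' Ψ A y q ≤
      ((τ * (f z + b - (f y + a)) + τ ^ 2 * M * ‖z - y‖ ^ 2 / 2 : ℝ) : EReal) := by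
  refine (iInf_le _ (τ • (z - y))).trans ?_
  have hΨτ : Ψ (y + τ • (z - y)) ≤ (((1 - τ) * a + τ * b : ℝ) : EReal) := by
    rw [show y + τ • (z - y) = (1 - τ) • y + τ • z by module]
    refine (hΨ y z _ _ (by linarith) hτ0 (by ring)).trans_eq ?_
    rw [hy, hz]
    norm_cast
  refine (modelQ_le_coe hy hΨτ).trans ?_
  rw [EReal.coe_le_coe_iff, map_smul, real_inner_smul_left, real_inner_smul_right,
    real_inner_smul_right]
  have hgrad := hf.add_inner_gradient_sub_le trivial trivial (hf' y) (b := z)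
  nlinarith [mul_le_mul_of_nonneg_left hgrad hτ0,
    mul_le_mul_of_nonneg_left (hA (z - y)) (sq_nonneg τ)]

end Model

theorem EReal.le_one_sub_mul_of_coe_sub_le_mul_neg {Q : EReal} {q B η : ℝ} (hbot : Q ≠ ⊥)
    (hB : Q ≤ B) (hη : η ≤ 1) (h : (q : EReal) - Q ≤ η * -Q) : q ≤ (1 - η) * B := by
  induction Q using EReal.rec with
  | bot => exact absurd rfl hbot
  | top => simp at hB
  | coe r =>
    norm_cast at h hB
    nlinarith

theorem gap_le_of_inexact_step [CompleteSpace H] {f : H → ℝ} {f' : H → H} {Ψ : H → EReal}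
    {A : H →L[ℝ] H} {Ω : Set H} {y p : H} {Fstar δ δ' η γ M R τ : ℝ}
    (hf : ConvexOn ℝ Set.univ f) (hf' : ∀ z, HasGradientAt f (f' z) z) (hΨ : ConvexEReal Ψ)
    (hA : ∀ u, inner ℝ u (A u) ≤ M * ‖u‖ ^ 2) (hM : 0 ≤ M)
    (hΩ : ∀ z ∈ Ω, objF f Ψ z = (Fstar : EReal)) (hΩne : Ω.Nonempty) (hR : infDist y Ω ≤ R)
    (hy : objF f Ψ y = ((Fstar + δ : ℝ) : EReal))
    (hyp : objF f Ψ (y + p) = ((Fstar + δ' : ℝ) : EReal))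
    (hbot : ⨅ q, modelQ f' Ψ A y q ≠ ⊥) (hη : η ≤ 1) (hγ : 0 ≤ γ)
    (hinexact : modelQ f' Ψ A y p - ⨅ q, modelQ f' Ψ A y q ≤
      (η : EReal) * -⨅ q, modelQ f' Ψ A y q)
    (hdecrease : objF f Ψ (y + p) ≤ objF f Ψ y + (γ : EReal) * modelQ f' Ψ A y p)
    (hτ0 : 0 ≤ τ) (hτ1 : τ ≤ 1) :
    δ' ≤ δ + γ * (1 - η) * (-τ * δ + τ ^ 2 * (M * R ^ 2) / 2) := by
  have hΨy := EReal.eq_coe_sub_of_coe_add_eq_coe hy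
  have hQp := modelQ_eq_coe (f' := f') (A := A) hΨy (EReal.eq_coe_sub_of_coe_add_eq_coe hyp)
  have hδ' : Fstar + δ' ≤ Fstar + δ + γ * (inner ℝ (f' y) p + 1 / 2 * inner ℝ p (A p) +
      (Fstar + δ' - f (y + p)) - (Fstar + δ - f y)) := by
    rw [hy, hyp, hQp] at hdecrease
    exact_mod_cast hdecrease
  -- `Ω` need not contain a point nearest to `y`: use points at distance `< r` and let `r ↓ R`.
  have hdist : ∀ r > R, δ' ≤ δ + γ * (1 - η) * (-τ * δ + τ ^ 2 * (M * r ^ 2) / 2) := by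
    intro r hr
    obtain ⟨z, hzΩ, hzy⟩ := (infDist_lt_iff hΩne).mp (hR.trans_lt hr)
    have hQmin := iInf_modelQ_le hf hf' hΨ hA hΨy
      (EReal.eq_coe_sub_of_coe_add_eq_coe (hΩ z hzΩ)) hτ0 hτ1
    have hQp' := EReal.le_one_sub_mul_of_coe_sub_le_mul_neg hbot hQmin hη (hQp ▸ hinexact)
    have hzy' : ‖z - y‖ ^ 2 ≤ r ^ 2 := by
      rw [← dist_eq_norm, dist_comm]
      exact pow_le_pow_left₀ dist_nonneg hzy.le 2
    nlinarith [mul_le_mul_of_nonneg_left hQp' hγ, mul_le_mul_of_nonneg_left hzy'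
      (mul_nonneg (mul_nonneg hγ (sub_nonneg.mpr hη)) (mul_nonneg (sq_nonneg τ) hM))]
  have hcont : Continuous fun r : ℝ => δ + γ * (1 - η) * (-τ * δ + τ ^ 2 * (M * r ^ 2) / 2) := by
    fun_prop
  exact ge_of_tendsto ((hcont.tendsto R).mono_left nhdsWithin_le_nhds)
    (eventually_nhdsWithin_of_forall (s := Set.Ioi R) hdist)

end InnerProductSpace

theorem le_two_mul_div_of_le_add_mul {a : ℕ → ℝ} {c D : ℝ} (hD : 0 < D) (hc0 : 0 < c)
    (hc1 : c ≤ 1) (ha : ∀ n, 0 ≤ a n) (h0 : a 0 ≤ D)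
    (hstep : ∀ n τ, 0 ≤ τ → τ ≤ 1 → a (n + 1) ≤ a n + c * (-τ * a n + τ ^ 2 * D / 2))
    (n : ℕ) : a n ≤ 2 * D / (c * n + 2) := by
  induction n with
  | zero => simpa using h0
  | succ n ih =>
    have hT : 2 ≤ c * n + 2 := le_add_of_nonneg_left (by positivity)
    have hn : a n * (c * n + 2) ≤ 2 * D := (le_div_iff₀ (by linarith)).mp ih
    have hnD : a n ≤ D := by nlinarith [ha n]
    -- `τ = a n / D` minimizes the right-hand side of `hstep`.
    have hsucc : 2 * D * a (n + 1) ≤ 2 * D * a n - c * a n ^ 2 := by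
      have := hstep n (a n / D) (div_nonneg (ha n) hD.le) ((div_le_one hD).mpr hnD)
      rw [show a n + c * (-(a n / D) * a n + (a n / D) ^ 2 * D / 2)
        = (2 * D * a n - c * a n ^ 2) / (2 * D) by field_simp; ring,
        le_div_iff₀ (by positivity)] at this
      linarith
    -- `4D² - (2D a - c a²)(T + c) = (2D - a T)(2D - c a) + (c a)²` with `a = a n`, `T = c n + 2`.
    have hdecay : (2 * D * a n - c * a n ^ 2) * (c * n + 2 + c) ≤ 2 * D * (2 * D) := by
      nlinarith [mul_nonneg (sub_nonneg.mpr hn) (by nlinarith [ha n] : 0 ≤ 2 * D - c * a n),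
        sq_nonneg (c * a n)]
    rw [le_div_iff₀ (by positivity), Nat.cast_succ]
    nlinarith [mul_le_mul_of_nonneg_right hsucc (by positivity : (0 : ℝ) ≤ c * n + 2 + c)]

theorem nat_le_two_div_mul_log_of_le_pow {n : ℕ} {b c D : ℝ} (hD : 0 < D) (hc0 : 0 < c)
    (hc2 : c < 2) (h : D ≤ (1 - c / 2) ^ n * b) : (n : ℝ) ≤ 2 / c * Real.log (b / D) := by
  have hρ : 0 < 1 - c / 2 := by linarith
  have hb : 0 < b := pos_of_mul_pos_right (hD.trans_le h) (pow_pos hρ n).le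
  have hlog : Real.log D ≤ n * Real.log (1 - c / 2) + Real.log b := by
    rw [← Real.log_pow, ← Real.log_mul (pow_pos hρ n).ne' hb.ne']
    exact Real.log_le_log hD h
  have hlogρ : Real.log (1 - c / 2) ≤ -(c / 2) := by
    linarith [Real.log_le_sub_one_of_pos hρ]
  rw [Real.log_div hb.ne' hD.ne', div_mul_eq_mul_div, le_div_iff₀ hc0]
  nlinarith [mul_le_mul_of_nonneg_left hlogρ n.cast_nonneg]

theorem rates_of_gap_le {δ : ℕ → ℝ} {k : ℕ → ℕ} {c D : ℝ} {t₀ : ℕ} (hδ0 : ∀ t, 0 ≤ δ t)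
    (hδ : Antitone δ) (hk : StrictMono k) (hD : 0 < D) (hc0 : 0 < c) (hc1 : c ≤ 1)
    (hgap : ∀ t τ, 0 ≤ τ → τ ≤ 1 →
      δ (k t + 1) ≤ δ (k t) + c * (-τ * δ (k t) + τ ^ 2 * D / 2))
    (ht₀ : δ (k t₀) < D) (ht₀_first : ∀ s < t₀, ¬ δ (k s) < D) :
    (∀ t, D ≤ δ (k t) → δ (k t + 1) ≤ (1 - c / 2) * δ (k t)) ∧
    (∀ t, t₀ ≤ t → δ (k t) ≤ 2 * D / (c * ((t : ℝ) - (t₀ : ℝ)) + 2)) ∧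
    (t₀ : ℝ) ≤ max 0 (1 + 2 / c * Real.log (δ 0 / D)) := by
  have hnext : ∀ t, δ (k (t + 1)) ≤ δ (k t + 1) := fun t => hδ (hk (Nat.lt_succ_self t))
  have linear : ∀ t, D ≤ δ (k t) → δ (k t + 1) ≤ (1 - c / 2) * δ (k t) := fun t ht => by
    nlinarith [hgap t 1 zero_le_one le_rfl]
  refine ⟨linear, fun t ht => ?_, ?_⟩
  · obtain ⟨j, rfl⟩ := Nat.exists_eq_add_of_le ht
    have := le_two_mul_div_of_le_add_mul (a := fun j => δ (k (t₀ + j))) hD hc0 hc1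
      (fun _ => hδ0 _) ht₀.le (fun j τ hτ0 hτ1 => (hnext _).trans (hgap _ τ hτ0 hτ1)) j
    simpa using this
  · rcases t₀ with _ | s
    · simp
    have hs : D ≤ δ (k s) := not_lt.mp (ht₀_first s s.lt_succ_self)
    have hgeom : δ (k s) ≤ (1 - c / 2) ^ s * δ (k 0) :=
      le_geom (u := fun n => δ (k n)) (by linarith) s fun n hn =>
        (hnext n).trans (linear n (not_lt.mp (ht₀_first n (by omega))))
    have hk0 : (1 - c / 2) ^ s * δ (k 0) ≤ (1 - c / 2) ^ s * δ 0 :=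
      mul_le_mul_of_nonneg_left (hδ (Nat.zero_le _)) (pow_nonneg (by linarith) s)
    have := nat_le_two_div_mul_log_of_le_pow hD hc0 (by linarith) (hs.trans (hgeom.trans hk0))
    push_cast
    exact le_max_of_le_right (by linarith)

theorem statement11_general
    {H : Type*} [NormedAddCommGroup H] [InnerProductSpace ℝ H] [CompleteSpace H]
    (f : H → ℝ) (f' : H → H) (Ψ : H → EReal) (Ω : Set H) (Fstar : ℝ)
    (x : ℕ → H) (k : ℕ → ℕ) (Hop : ℕ → H →L[ℝ] H) (p : ℕ → H) (δ : ℕ → ℝ)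
    (L Mt mt η γ R0 : ℝ) (t₀ : ℕ)
    -- f convex and L-smooth with gradient f'
    (hf_conv : ConvexOn ℝ Set.univ f)
    (hf_diff : ∀ y : H, HasGradientAt f (f' y) y)
    -- Ψ convex, proper, lower semicontinuous
    (hΨ_conv : ConvexEReal Ψ)
    (hΨ_lsc : LowerSemicontinuous Ψ)
    -- F* attained on the nonempty solution set Ω
    (hΩ_ne : Ω.Nonempty)
    (hΩ : ∀ y : H, y ∈ Ω ↔ objF f Ψ y = (Fstar : EReal))
    (hFstar_lb : ∀ y : H, (Fstar : EReal) ≤ objF f Ψ y)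
    -- δ_t = F(x^t) − F*
    (hδ : ∀ t : ℕ, objF f Ψ (x t) = ((Fstar + δ t : ℝ) : EReal))
    -- monotone iterates
    (hmono : ∀ t : ℕ, objF f Ψ (x (t + 1)) ≤ objF f Ψ (x t))
    -- strictly increasing indices k_0 < k_1 < ...
    (hk : StrictMono k)
    -- self-adjoint operators with M̃ ⪰ H_{k_i} ⪰ m̃ > 0
    (hmt : 0 < mt)
    (hH_lb : ∀ i : ℕ, ∀ u : H, mt * ‖u‖ ^ 2 ≤ (inner ℝ u (Hop i u) : ℝ))
    (hH_ub : ∀ i : ℕ, ∀ u : H, (inner ℝ u (Hop i u) : ℝ) ≤ Mt * ‖u‖ ^ 2)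
    -- multiplicative inexactness with parameter η ∈ [0,1) at the iterations k_i
    (hη0 : 0 ≤ η) (hη1 : η < 1)
    (hinexact : ∀ i : ℕ,
      modelQ f' Ψ (Hop i) (x (k i)) (p i) -
        (⨅ q : H, modelQ f' Ψ (Hop i) (x (k i)) q) ≤
      (η : EReal) * -(⨅ q : H, modelQ f' Ψ (Hop i) (x (k i)) q))
    -- update and sufficient decrease with unit step size, γ ∈ (0,1)
    (hγ0 : 0 < γ) (hγ1 : γ < 1)
    (hstep : ∀ i : ℕ, x (k i + 1) = x (k i) + p i)
    (harmijo : ∀ i : ℕ, objF f Ψ (x (k i + 1)) ≤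
      objF f Ψ (x (k i)) + (γ : EReal) * modelQ f' Ψ (Hop i) (x (k i)) (p i))
    -- R₀ is the supremum of the distances to Ω over the initial level set, R₀ < ∞
    (hR0 : IsLUB {r : ℝ | ∃ z : H, objF f Ψ z ≤ objF f Ψ (x 0) ∧ r = infDist z Ω} R0)
    -- t₀ is the first index with δ_{k_{t₀}} < M̃ R₀²
    (ht₀ : δ (k t₀) < Mt * R0 ^ 2)
    (ht₀_first : ∀ s : ℕ, s < t₀ → ¬ δ (k s) < Mt * R0 ^ 2) :
    -- (a) linear decrease while the gap is at least M̃ R₀²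
    (∀ t : ℕ, Mt * R0 ^ 2 ≤ δ (k t) →
      δ (k t + 1) ≤ (1 - γ * (1 - η) / 2) * δ (k t)) ∧
    -- (b) O(1/t) rate after t₀, and a bound on t₀
    (∀ t : ℕ, t₀ ≤ t →
      δ (k t) ≤ 2 * Mt * R0 ^ 2 / (γ * (1 - η) * ((t : ℝ) - (t₀ : ℝ)) + 2)) ∧
    (t₀ : ℝ) ≤ max 0 (1 + 2 / (γ * (1 - η)) * Real.log (δ 0 / (Mt * R0 ^ 2))) := by
  have hδ_nonneg : ∀ t, 0 ≤ δ t := fun t => by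
    have := hFstar_lb (x t)
    rw [hδ t] at this
    linarith [EReal.coe_le_coe_iff.mp this]
  have hδ_anti : Antitone δ := antitone_nat_of_succ_le fun t => by
    have := hmono t
    rw [hδ, hδ] at this
    linarith [EReal.coe_le_coe_iff.mp this]
  set D := Mt * R0 ^ 2
  have hD : 0 < D := (hδ_nonneg _).trans_lt ht₀
  have hMt : 0 ≤ Mt := (pos_of_mul_pos_left hD (sq_nonneg R0)).le
  obtain ⟨g, b, hg⟩ :=
    hΨ_conv.exists_affine_le hΨ_lsc (EReal.eq_coe_sub_of_coe_add_eq_coe (hδ 0))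
  have hgap : ∀ t τ, 0 ≤ τ → τ ≤ 1 →
      δ (k t + 1) ≤ δ (k t) + γ * (1 - η) * (-τ * δ (k t) + τ ^ 2 * D / 2) := by
    intro t τ hτ0 hτ1
    have hlevel : objF f Ψ (x (k t)) ≤ objF f Ψ (x 0) := by
      rw [hδ, hδ]
      exact EReal.coe_le_coe_iff.mpr (by linarith [hδ_anti (Nat.zero_le (k t))])
    exact gap_le_of_inexact_step hf_conv hf_diff hΨ_conv (hH_ub t) hMt (fun z => (hΩ z).mp)
      hΩ_ne (hR0.1 ⟨_, hlevel, rfl⟩) (hδ _) (hstep t ▸ hδ _)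
      (iInf_modelQ_ne_bot hmt (hH_lb t) hg (EReal.eq_coe_sub_of_coe_add_eq_coe (hδ _)))
      hη1.le hγ0.le (hinexact t) (hstep t ▸ harmijo t) hτ0 hτ1
  simpa only [mul_assoc] using rates_of_gap_le hδ_nonneg hδ_anti hk hD
    (mul_pos hγ0 (by linarith)) (by nlinarith) hgap ht₀ ht₀_first

/-- global O(1/t) rate of ISQA⁺ for convex f, where
`R₀ = sup {‖z − P_Ω(z)‖ : F(z) ≤ F(x^0)} < ∞` and `δ_t = F(x^t) − F*`. -/
theorem statement11
    {H : Type*} [NormedAddCommGroup H] [InnerProductSpace ℝ H] [CompleteSpace H]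
    (f : H → ℝ) (f' : H → H) (Ψ : H → EReal) (Ω : Set H) (Fstar : ℝ)
    (x : ℕ → H) (k : ℕ → ℕ) (Hop : ℕ → H →L[ℝ] H) (p : ℕ → H) (δ : ℕ → ℝ)
    (L Mt mt η γ R0 : ℝ) (t₀ : ℕ)
    -- f convex and L-smooth with gradient f'
    (hf_conv : ConvexOn ℝ Set.univ f)
    (hf_diff : ∀ y : H, HasGradientAt f (f' y) y)
    (hL : 0 < L)
    (hLip : ∀ a b : H, ‖f' a - f' b‖ ≤ L * ‖a - b‖)
    -- Ψ convex, proper, lower semicontinuous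
    (hΨ_conv : ConvexEReal Ψ)
    (hΨ_proper : ProperEReal Ψ)
    (hΨ_lsc : LowerSemicontinuous Ψ)
    -- F* attained on the nonempty solution set Ω
    (hΩ_ne : Ω.Nonempty)
    (hΩ : ∀ y : H, y ∈ Ω ↔ objF f Ψ y = (Fstar : EReal))
    (hFstar_lb : ∀ y : H, (Fstar : EReal) ≤ objF f Ψ y)
    -- δ_t = F(x^t) − F*
    (hδ : ∀ t : ℕ, objF f Ψ (x t) = ((Fstar + δ t : ℝ) : EReal))
    -- monotone iterates
    (hmono : ∀ t : ℕ, objF f Ψ (x (t + 1)) ≤ objF f Ψ (x t))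
    -- strictly increasing indices k_0 < k_1 < ...
    (hk : StrictMono k)
    -- self-adjoint operators with M̃ ⪰ H_{k_i} ⪰ m̃ > 0
    (hmt : 0 < mt)
    (hH_sa : ∀ i : ℕ, ∀ u v : H, (inner ℝ (Hop i u) v : ℝ) = (inner ℝ u (Hop i v) : ℝ))
    (hH_lb : ∀ i : ℕ, ∀ u : H, mt * ‖u‖ ^ 2 ≤ (inner ℝ u (Hop i u) : ℝ))
    (hH_ub : ∀ i : ℕ, ∀ u : H, (inner ℝ u (Hop i u) : ℝ) ≤ Mt * ‖u‖ ^ 2)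
    -- multiplicative inexactness with parameter η ∈ [0,1) at the iterations k_i
    (hη0 : 0 ≤ η) (hη1 : η < 1)
    (hinexact : ∀ i : ℕ,
      modelQ f' Ψ (Hop i) (x (k i)) (p i) -
        (⨅ q : H, modelQ f' Ψ (Hop i) (x (k i)) q) ≤
      (η : EReal) * -(⨅ q : H, modelQ f' Ψ (Hop i) (x (k i)) q))
    -- update and sufficient decrease with unit step size, γ ∈ (0,1)
    (hγ0 : 0 < γ) (hγ1 : γ < 1)
    (hstep : ∀ i : ℕ, x (k i + 1) = x (k i) + p i)
    (harmijo : ∀ i : ℕ, objF f Ψ (x (k i + 1)) ≤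
      objF f Ψ (x (k i)) + (γ : EReal) * modelQ f' Ψ (Hop i) (x (k i)) (p i))
    -- R₀ is the supremum of the distances to Ω over the initial level set, R₀ < ∞
    (hR0 : IsLUB {r : ℝ | ∃ z : H, objF f Ψ z ≤ objF f Ψ (x 0) ∧ r = infDist z Ω} R0)
    -- t₀ is the first index with δ_{k_{t₀}} < M̃ R₀²
    (ht₀ : δ (k t₀) < Mt * R0 ^ 2)
    (ht₀_first : ∀ s : ℕ, s < t₀ → ¬ δ (k s) < Mt * R0 ^ 2) :
    -- (a) linear decrease while the gap is at least M̃ R₀²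
    (∀ t : ℕ, Mt * R0 ^ 2 ≤ δ (k t) →
      δ (k t + 1) ≤ (1 - γ * (1 - η) / 2) * δ (k t)) ∧
    -- (b) O(1/t) rate after t₀, and a bound on t₀
    (∀ t : ℕ, t₀ ≤ t →
      δ (k t) ≤ 2 * Mt * R0 ^ 2 / (γ * (1 - η) * ((t : ℝ) - (t₀ : ℝ)) + 2)) ∧
    (t₀ : ℝ) ≤ max 0 (1 + 2 / (γ * (1 - η)) * Real.log (δ 0 / (Mt * R0 ^ 2))) :=
  statement11_general f f' Ψ Ω Fstar x k Hop p δ L Mt mt η γ R0 t₀ hf_conv hf_diff hΨ_conv hΨ_lsc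
    hΩ_ne hΩ hFstar_lb hδ hmono hk hmt hH_lb hH_ub hη0 hη1 hinexact hγ0 hγ1 hstep harmijo hR0 ht₀
    ht₀_first
end
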